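/- arXiv:1112.4757 — 2 statements merged into one kernel-verified Lean document; each statement's English description precedes it below -/
import Mathlib

section
/- For convex bodies K, L in ℝⁿ, the function f(x) = |K ∩ (x - L)|^{1/n} is concave on the Minkowski sum K + L. -/
/-!
For `x ∈ K + L` the slice `A x = K ∩ (x - L)` is a nonempty compact set, and convexity of `K` and
`L` gives `a • A x + b • A y ⊆ A (a • x + b • y)` whenever `a + b = 1`. Concavity of
`x ↦ |A x| ^ (1/n)` is therefore the Brunn–Minkowski inequality
`|A| ^ (1/n) + |B| ^ (1/n) ≤ |A + B| ^ (1/n)` combined with the homogeneity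
`|c • A| ^ (1/n) = c * |A| ^ (1/n)`.

After rescaling `A` and `B` to the same volume, Brunn–Minkowski follows from its multiplicative
form `|A| ^ (1 - t) * |B| ^ t ≤ |(1 - t) • A + t • B|`, which is the Prékopa–Leindler inequality
for indicator functions. Prékopa–Leindler is proved on `ℝ` by applying the one-dimensional
Brunn–Minkowski inequality (`|X| + |Y| ≤ |X + Y|`) to superlevel sets and integrating over the
level (layer-cake formula), after normalising `sup f = sup g = 1`; it passes to products of measures
by Fubini, hence to `ℝⁿ` by induction on `n`.
-/

open MeasureTheory Set
open scoped Pointwise ENNReal NNReal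

theorem measure_le_measure_add_left {G : Type*} [AddGroup G] [MeasurableSpace G]
    {μ : Measure G} [μ.IsAddLeftInvariant] {A B : Set G} {a : G} (ha : a ∈ A) :
    μ B ≤ μ (A + B) :=
  (measure_vadd μ a B).symm.trans_le (measure_mono (vadd_set_subset_add ha))

theorem measure_le_measure_add_right {G : Type*} [AddCommGroup G] [MeasurableSpace G]
    {μ : Measure G} [μ.IsAddLeftInvariant] {A B : Set G} {b : G} (hb : b ∈ B) :
    μ A ≤ μ (A + B) :=
  add_comm B A ▸ measure_le_measure_add_left hb

theorem Real.volume_add_volume_le_volume_add_of_isCompact {K C : Set ℝ} (hK : IsCompact K)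
    (hC : IsCompact C) (hK' : K.Nonempty) (hC' : C.Nonempty) :
    volume K + volume C ≤ volume (K + C) := by
  set a := sSup K
  set b := sInf C
  have ha : a ∈ K := hK.sSup_mem hK'
  have hb : b ∈ C := hC.sInf_mem hC'
  -- `a + C` and `b + K` both lie in `K + C`, and they meet only at `a + b`
  have hdisj : Disjoint (a +ᵥ C) ((b +ᵥ K) \ {a + b}) := by
    rw [Set.disjoint_left]
    rintro _ ⟨c, hc, rfl⟩ ⟨⟨k, hk, hkc⟩, hne⟩
    have := csInf_le hC.bddBelow hc
    have := le_csSup hK.bddAbove hk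
    simp only [vadd_eq_add, mem_singleton_iff] at hkc hne
    exact hne (by linarith)
  calc volume K + volume C = volume (a +ᵥ C) + volume ((b +ᵥ K) \ {a + b}) := by
        rw [measure_vadd, measure_sdiff_null (measure_singleton _), measure_vadd, add_comm]
    _ = volume ((a +ᵥ C) ∪ ((b +ᵥ K) \ {a + b})) :=
        (measure_union hdisj ((hK.measurableSet.const_vadd b).diff (measurableSet_singleton _))).symm
    _ ≤ volume (K + C) := by
        refine measure_mono (union_subset (vadd_set_subset_add ha) (sdiff_subset.trans ?_))
        rw [add_comm K C]
        exact vadd_set_subset_add hb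

theorem Real.volume_add_volume_le_volume_add {X Y : Set ℝ} (hX : MeasurableSet X)
    (hY : MeasurableSet Y) (hX' : X.Nonempty) (hY' : Y.Nonempty) :
    volume X + volume Y ≤ volume (X + Y) := by
  rcases eq_or_ne (volume X) 0 with hX0 | hX0
  · simpa [hX0] using measure_le_measure_add_left hX'.some_mem
  rcases eq_or_ne (volume Y) 0 with hY0 | hY0
  · simpa [hY0] using measure_le_measure_add_right hY'.some_mem
  refine le_of_forall_lt fun c hc => ?_
  obtain ⟨a, ha, b, hb, hab⟩ := ENNReal.exists_lt_add_of_lt_add hc hX0 hY0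
  obtain ⟨K, hKX, hK, haK⟩ := hX.exists_lt_isCompact ha
  obtain ⟨C, hCY, hC, hbC⟩ := hY.exists_lt_isCompact hb
  calc c < a + b := hab
    _ ≤ volume K + volume C := add_le_add haK.le hbC.le
    _ ≤ volume (K + C) := volume_add_volume_le_volume_add_of_isCompact hK hC
        (nonempty_of_measure_ne_zero (pos_of_gt haK).ne')
        (nonempty_of_measure_ne_zero (pos_of_gt hbC).ne')
    _ ≤ volume (X + Y) := measure_mono (add_subset_add hKX hCY)

theorem Real.volume_smul_of_nonneg {r : ℝ} (hr : 0 ≤ r) (s : Set ℝ) :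
    volume (r • s) = ENNReal.ofReal r * volume s := by
  rw [Measure.addHaar_smul_of_nonneg volume hr, Module.finrank_self, pow_one]

theorem Real.volume_ofReal_lt_inter_Ioi (a : ℝ≥0∞) :
    volume ({s : ℝ | ENNReal.ofReal s < a} ∩ Ioi 0) = a := by
  rcases eq_or_ne a ⊤ with rfl | ha
  · simp
  have : {s : ℝ | ENNReal.ofReal s < a} ∩ Ioi 0 = Ioo 0 a.toReal := by
    ext s
    simp only [mem_inter_iff, mem_ofPred_eq, mem_Ioi, mem_Ioo, and_comm (a := ENNReal.ofReal s < a)]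
    exact and_congr_right fun hs => ENNReal.ofReal_lt_iff_lt_toReal hs.le ha
  rw [this, Real.volume_Ioo, sub_zero, ENNReal.ofReal_toReal ha]

theorem lintegral_eq_lintegral_meas_ofReal_lt {α : Type*} [MeasurableSpace α] (μ : Measure α)
    [SFinite μ] {f : α → ℝ≥0∞} (hf : Measurable f) :
    ∫⁻ x, f x ∂μ = ∫⁻ s in Ioi (0 : ℝ), μ {x | ENNReal.ofReal s < f x} := by
  have hf' (x : α) : f x = ∫⁻ s in Ioi (0 : ℝ), {s | ENNReal.ofReal s < f x}.indicator 1 s := by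
    rw [lintegral_indicator_one (measurableSet_lt ENNReal.measurable_ofReal measurable_const),
      Measure.restrict_apply' measurableSet_Ioi, Real.volume_ofReal_lt_inter_Ioi]
  have hmeas : Measurable (Function.uncurry fun x (s : ℝ) =>
      {s | ENNReal.ofReal s < f x}.indicator (1 : ℝ → ℝ≥0∞) s) :=
    measurable_const.indicator
      (measurableSet_lt (ENNReal.measurable_ofReal.comp measurable_snd) (hf.comp measurable_fst))
  rw [lintegral_congr fun x => hf' x, lintegral_lintegral_swap hmeas.aemeasurable]
  congr with s
  exact lintegral_indicator_one (measurableSet_lt measurable_const hf)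

theorem ENNReal.min_le_rpow_mul_rpow (a b : ℝ≥0∞) {t : ℝ} (ht0 : 0 ≤ t) (ht1 : t ≤ 1) :
    min a b ≤ a ^ (1 - t) * b ^ t := by
  have h1t : 0 ≤ 1 - t := by linarith
  calc min a b = min a b ^ (1 - t) * min a b ^ t := by
        rw [← ENNReal.rpow_add_of_nonneg _ _ h1t ht0, sub_add_cancel, ENNReal.rpow_one]
    _ ≤ a ^ (1 - t) * b ^ t :=
        mul_le_mul' (ENNReal.rpow_le_rpow (min_le_left a b) h1t)
          (ENNReal.rpow_le_rpow (min_le_right a b) ht0)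

theorem ENNReal.geom_mean_le_arith_mean2_weighted {t : ℝ} (ht0 : 0 < t) (ht1 : t < 1)
    (a b : ℝ≥0∞) : a ^ (1 - t) * b ^ t ≤ ENNReal.ofReal (1 - t) * a + ENNReal.ofReal t * b := by
  have h1t : 0 < 1 - t := by linarith
  rcases eq_or_ne a ⊤ with rfl | ha
  · simp [ENNReal.mul_top (ENNReal.ofReal_pos.2 h1t).ne']
  rcases eq_or_ne b ⊤ with rfl | hb
  · simp [ENNReal.mul_top (ENNReal.ofReal_pos.2 ht0).ne']
  lift a to ℝ≥0 using ha
  lift b to ℝ≥0 using hb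
  have := NNReal.geom_mean_le_arith_mean2_weighted (Real.toNNReal (1 - t)) (Real.toNNReal t) a b
    (by rw [← Real.toNNReal_add h1t.le ht0.le, sub_add_cancel, Real.toNNReal_one])
  rw [Real.coe_toNNReal _ h1t.le, Real.coe_toNNReal _ ht0.le] at this
  rw [← ENNReal.coe_rpow_of_nonneg _ h1t.le, ← ENNReal.coe_rpow_of_nonneg _ ht0.le,
    ENNReal.ofReal, ENNReal.ofReal]
  exact_mod_cast this

theorem ENNReal.rpow_mul_inv_mul_rpow {M : ℝ≥0∞} (hM0 : M ≠ 0) (hM : M ≠ ⊤) (a : ℝ≥0∞) {p : ℝ}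
    (hp : 0 ≤ p) : (a * M⁻¹) ^ p * M ^ p = a ^ p := by
  rw [← ENNReal.mul_rpow_of_nonneg _ _ hp, mul_assoc, ENNReal.inv_mul_cancel hM0 hM, mul_one]

theorem ENNReal.toReal_rpow_le_toReal_rpow {a b : ℝ≥0∞} (hb : b ≠ ⊤) (hab : a ≤ b) {p : ℝ}
    (hp : 0 ≤ p) : a.toReal ^ p ≤ b.toReal ^ p :=
  Real.rpow_le_rpow ENNReal.toReal_nonneg (ENNReal.toReal_mono hb hab) hp

section PrekopaLeindlerReal

variable {t : ℝ} {f g h : ℝ → ℝ≥0∞}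

theorem Real.volume_superlevel_le (ht0 : 0 < t) (ht1 : t < 1) (hf : Measurable f)
    (hg : Measurable g) (hfgh : ∀ x y, f x ^ (1 - t) * g y ^ t ≤ h ((1 - t) • x + t • y))
    {r : ℝ≥0∞} (hrf : {x | r < f x}.Nonempty) (hrg : {y | r < g y}.Nonempty) :
    ENNReal.ofReal (1 - t) * volume {x | r < f x} + ENNReal.ofReal t * volume {y | r < g y}
      ≤ volume {z | r < h z} := by
  have hsub : (1 - t) • {x | r < f x} + t • {y | r < g y} ⊆ {z | r < h z} := by
    rintro _ ⟨_, ⟨x, hx, rfl⟩, _, ⟨y, hy, rfl⟩, rfl⟩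
    exact (lt_min hx hy).trans_le
      ((ENNReal.min_le_rpow_mul_rpow _ _ ht0.le ht1.le).trans (hfgh x y))
  have hX : MeasurableSet {x | r < f x} := measurableSet_lt measurable_const hf
  have hY : MeasurableSet {y | r < g y} := measurableSet_lt measurable_const hg
  calc ENNReal.ofReal (1 - t) * volume {x | r < f x} + ENNReal.ofReal t * volume {y | r < g y}
      = volume ((1 - t) • {x | r < f x}) + volume (t • {y | r < g y}) := by
        rw [Real.volume_smul_of_nonneg (by linarith), Real.volume_smul_of_nonneg ht0.le]
    _ ≤ volume ((1 - t) • {x | r < f x} + t • {y | r < g y}) :=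
        Real.volume_add_volume_le_volume_add (hX.const_smul₀ _) (hY.const_smul₀ _)
          hrf.smul_set hrg.smul_set
    _ ≤ volume {z | r < h z} := measure_mono hsub

theorem Real.lintegral_add_le_of_iSup_eq_one (ht0 : 0 < t) (ht1 : t < 1) (hf : Measurable f)
    (hg : Measurable g) (hh : Measurable h) (hf1 : ⨆ x, f x = 1) (hg1 : ⨆ y, g y = 1)
    (hfgh : ∀ x y, f x ^ (1 - t) * g y ^ t ≤ h ((1 - t) • x + t • y)) :
    ENNReal.ofReal (1 - t) * (∫⁻ x, f x) + ENNReal.ofReal t * (∫⁻ y, g y) ≤ ∫⁻ z, h z := by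
  have hlevel (s : ℝ) : ENNReal.ofReal (1 - t) * volume {x | ENNReal.ofReal s < f x}
      + ENNReal.ofReal t * volume {y | ENNReal.ofReal s < g y}
      ≤ volume {z | ENNReal.ofReal s < h z} := by
    rcases lt_or_ge s 1 with hs | hs
    · have hs1 : ENNReal.ofReal s < 1 := ENNReal.ofReal_lt_one.2 hs
      exact Real.volume_superlevel_le ht0 ht1 hf hg hfgh
        (lt_iSup_iff.1 (hf1.symm ▸ hs1 : _ < ⨆ x, f x))
        (lt_iSup_iff.1 (hg1.symm ▸ hs1 : _ < ⨆ y, g y))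
    · have hempty {u : ℝ → ℝ≥0∞} (hu : ⨆ x, u x = 1) : {x | ENNReal.ofReal s < u x} = ∅ :=
        eq_empty_of_forall_notMem fun x hx =>
          (hx.trans_le (hu ▸ le_iSup u x)).not_ge (ENNReal.one_le_ofReal.2 hs)
      simp [hempty hf1, hempty hg1]
  have hanti {u : ℝ → ℝ≥0∞} : Measurable fun s : ℝ => volume {x | ENNReal.ofReal s < u x} :=
    Antitone.measurable fun s s' hss' =>
      measure_mono fun x hx => (ENNReal.ofReal_le_ofReal hss').trans_lt hx
  rw [lintegral_eq_lintegral_meas_ofReal_lt volume hf,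
    lintegral_eq_lintegral_meas_ofReal_lt volume hg,
    lintegral_eq_lintegral_meas_ofReal_lt volume hh, ← lintegral_const_mul _ hanti,
    ← lintegral_const_mul _ hanti, ← lintegral_add_left (hanti.const_mul _)]
  exact lintegral_mono hlevel

theorem Real.lintegral_rpow_mul_lintegral_rpow_le_of_iSup_ne_top (ht0 : 0 < t) (ht1 : t < 1)
    (hf : Measurable f) (hg : Measurable g) (hh : Measurable h) (hfM : ⨆ x, f x ≠ ⊤)
    (hgM : ⨆ y, g y ≠ ⊤) (hfgh : ∀ x y, f x ^ (1 - t) * g y ^ t ≤ h ((1 - t) • x + t • y)) :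
    (∫⁻ x, f x) ^ (1 - t) * (∫⁻ y, g y) ^ t ≤ ∫⁻ z, h z := by
  have h1t : 0 < 1 - t := by linarith
  set Mf := ⨆ x, f x
  set Mg := ⨆ y, g y
  rcases eq_or_ne Mf 0 with hMf0 | hMf0
  · simp [ENNReal.iSup_eq_zero.1 hMf0, ENNReal.zero_rpow_of_pos h1t]
  rcases eq_or_ne Mg 0 with hMg0 | hMg0
  · simp [ENNReal.iSup_eq_zero.1 hMg0, ENNReal.zero_rpow_of_pos ht0]
  have hMf0' : Mf ^ (1 - t) ≠ 0 := by simp [hMf0, hfM, h1t]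
  have hMf' : Mf ^ (1 - t) ≠ ⊤ := by simp [hMf0, hfM, h1t]
  set c := Mf ^ (1 - t) * Mg ^ t
  have hc0 : c ≠ 0 := mul_ne_zero hMf0' (by simp [hMg0, hgM, ht0])
  have hc : c ≠ ⊤ := ENNReal.mul_ne_top hMf' (by simp [hMg0, hgM, ht0])
  have key := Real.lintegral_add_le_of_iSup_eq_one ht0 ht1 (hf.mul_const Mf⁻¹)
    (hg.mul_const Mg⁻¹) (hh.mul_const c⁻¹)
    (by rw [← ENNReal.iSup_mul, ENNReal.mul_inv_cancel hMf0 hfM])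
    (by rw [← ENNReal.iSup_mul, ENNReal.mul_inv_cancel hMg0 hgM])
    (fun x y => by
      rw [ENNReal.mul_rpow_of_nonneg _ _ h1t.le, ENNReal.mul_rpow_of_nonneg _ _ ht0.le,
        ENNReal.inv_rpow, ENNReal.inv_rpow, mul_mul_mul_comm,
        ← ENNReal.mul_inv (.inl hMf0') (.inl hMf')]
      exact mul_le_mul_left (hfgh x y) _)
  rw [lintegral_mul_const' _ _ (by simp [hMf0]), lintegral_mul_const' _ _ (by simp [hMg0]),
    lintegral_mul_const' _ _ (by simp [hc0])] at key
  calc (∫⁻ x, f x) ^ (1 - t) * (∫⁻ y, g y) ^ t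
      = ((∫⁻ x, f x) * Mf⁻¹) ^ (1 - t) * ((∫⁻ y, g y) * Mg⁻¹) ^ t * c := by
        rw [mul_mul_mul_comm, ENNReal.rpow_mul_inv_mul_rpow hMf0 hfM _ h1t.le,
          ENNReal.rpow_mul_inv_mul_rpow hMg0 hgM _ ht0.le]
    _ ≤ (∫⁻ z, h z) * c⁻¹ * c :=
        mul_le_mul_left ((ENNReal.geom_mean_le_arith_mean2_weighted ht0 ht1 _ _).trans key) c
    _ = ∫⁻ z, h z := ENNReal.inv_mul_cancel_right hc0 hc

end PrekopaLeindlerReal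

def SatisfiesPrekopaLeindler {E : Type*} [AddCommGroup E] [Module ℝ E] [MeasurableSpace E]
    (μ : Measure E) : Prop :=
  ∀ ⦃t : ℝ⦄, 0 < t → t < 1 → ∀ ⦃f g h : E → ℝ≥0∞⦄, Measurable f → Measurable g → Measurable h →
    (∀ x y, f x ^ (1 - t) * g y ^ t ≤ h ((1 - t) • x + t • y)) →
    (∫⁻ x, f x ∂μ) ^ (1 - t) * (∫⁻ y, g y ∂μ) ^ t ≤ ∫⁻ z, h z ∂μ

theorem satisfiesPrekopaLeindler_volume_real : SatisfiesPrekopaLeindler (volume : Measure ℝ) := by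
  intro t ht0 ht1 f g h hf hg hh hfgh
  have h1t : 0 < 1 - t := by linarith
  -- the truncations `min f N` are bounded; pass to the limit by monotone convergence
  have htrunc (N M : ℕ) :
      (∫⁻ x, min (f x) N) ^ (1 - t) * (∫⁻ y, min (g y) M) ^ t ≤ ∫⁻ z, h z := by
    refine Real.lintegral_rpow_mul_lintegral_rpow_le_of_iSup_ne_top ht0 ht1
      (hf.min measurable_const) (hg.min measurable_const) hh
      (ne_top_of_le_ne_top (ENNReal.natCast_ne_top N) (iSup_le fun x => min_le_right _ _))
      (ne_top_of_le_ne_top (ENNReal.natCast_ne_top M) (iSup_le fun y => min_le_right _ _))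
      fun x y => (mul_le_mul' ?_ ?_).trans (hfgh x y)
    · exact ENNReal.rpow_le_rpow (min_le_left _ _) h1t.le
    · exact ENNReal.rpow_le_rpow (min_le_left _ _) ht0.le
  have hlim {u : ℝ → ℝ≥0∞} (hu : Measurable u) : ∫⁻ x, u x = ⨆ N : ℕ, ∫⁻ x, min (u x) N := by
    rw [← lintegral_iSup (fun N => hu.min measurable_const)
      fun N M hNM x => min_le_min_left _ (Nat.mono_cast hNM)]
    simp_rw [← inf_iSup_eq, ENNReal.iSup_natCast, inf_top_eq]
  have hrpow {a : ℕ → ℝ≥0∞} {p : ℝ} (hp : 0 < p) : (⨆ N, a N) ^ p = ⨆ N, a N ^ p :=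
    (ENNReal.orderIsoRpow p hp).map_iSup a
  rw [hlim hf, hlim hg, hrpow h1t, hrpow ht0, ENNReal.iSup_mul]
  refine iSup_le fun N => ?_
  rw [ENNReal.mul_iSup]
  exact iSup_le (htrunc N)

theorem satisfiesPrekopaLeindler_dirac_zero {E : Type*} [AddCommGroup E] [Module ℝ E]
    [MeasurableSpace E] : SatisfiesPrekopaLeindler (Measure.dirac (0 : E)) := by
  intro t _ _ f g h hf hg hh hfgh
  simpa [lintegral_dirac' _ hf, lintegral_dirac' _ hg, lintegral_dirac' _ hh] using hfgh 0 0

namespace SatisfiesPrekopaLeindler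

variable {E F : Type*} [AddCommGroup E] [Module ℝ E] [MeasurableSpace E]
  [AddCommGroup F] [Module ℝ F] [MeasurableSpace F] {μ : Measure E} {ν : Measure F}

theorem prod [SFinite μ] [SFinite ν] (hμ : SatisfiesPrekopaLeindler μ)
    (hν : SatisfiesPrekopaLeindler ν) : SatisfiesPrekopaLeindler (μ.prod ν) := by
  intro t ht0 ht1 f g h hf hg hh hfgh
  rw [lintegral_prod _ hf.aemeasurable, lintegral_prod _ hg.aemeasurable,
    lintegral_prod _ hh.aemeasurable]
  exact hμ ht0 ht1 hf.lintegral_prod_right' hg.lintegral_prod_right' hh.lintegral_prod_right'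
    fun x y => hν ht0 ht1 (hf.comp measurable_prodMk_left) (hg.comp measurable_prodMk_left)
      (hh.comp measurable_prodMk_left) fun x' y' => hfgh (x, x') (y, y')

theorem map_linearMap (hμ : SatisfiesPrekopaLeindler μ) (e : E →ₗ[ℝ] F)
    (he : MeasurePreserving e μ ν) : SatisfiesPrekopaLeindler ν := by
  intro t ht0 ht1 f g h hf hg hh hfgh
  rw [← he.lintegral_comp hf, ← he.lintegral_comp hg, ← he.lintegral_comp hh]
  exact hμ ht0 ht1 (hf.comp he.measurable) (hg.comp he.measurable) (hh.comp he.measurable)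
    fun x y => by simpa using hfgh (e x) (e y)

theorem measure_rpow_mul_rpow_le (hμ : SatisfiesPrekopaLeindler μ) {t : ℝ} (ht0 : 0 < t)
    (ht1 : t < 1) {A B S : Set E} (hA : MeasurableSet A) (hB : MeasurableSet B)
    (hS : MeasurableSet S) (hABS : (1 - t) • A + t • B ⊆ S) :
    μ A ^ (1 - t) * μ B ^ t ≤ μ S := by
  have h1t : 0 < 1 - t := by linarith
  have := hμ ht0 ht1 (measurable_one.indicator hA) (measurable_one.indicator hB)
    (measurable_one.indicator hS) fun x y => ?_
  · rwa [lintegral_indicator_one hA, lintegral_indicator_one hB, lintegral_indicator_one hS] at this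
  by_cases hx : x ∈ A
  · by_cases hy : y ∈ B
    · simp [hx, hy, hABS (add_mem_add (smul_mem_smul_set hx) (smul_mem_smul_set hy))]
    · simp [hy, ENNReal.zero_rpow_of_pos ht0]
  · simp [hx, ENNReal.zero_rpow_of_pos h1t]

end SatisfiesPrekopaLeindler

theorem satisfiesPrekopaLeindler_volume_pi (n : ℕ) :
    SatisfiesPrekopaLeindler (volume : Measure (Fin n → ℝ)) := by
  induction n with
  | zero =>
    rw [Measure.volume_pi_eq_dirac (α := fun _ : Fin 0 => ℝ) 0]
    exact satisfiesPrekopaLeindler_dirac_zero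
  | succ n ih =>
    refine (satisfiesPrekopaLeindler_volume_real.prod ih).map_linearMap
      (Fin.consLinearEquiv ℝ fun _ => ℝ).toLinearMap ?_
    have hcons : ⇑(Fin.consLinearEquiv ℝ fun _ : Fin (n + 1) => ℝ)
        = (MeasurableEquiv.piFinSuccAbove (fun _ : Fin (n + 1) => ℝ) 0).symm :=
      funext fun p => (Fin.insertNth_zero' _ _).symm
    rw [LinearEquiv.coe_coe, hcons]
    exact (volume_preserving_piFinSuccAbove (fun _ : Fin (n + 1) => ℝ) 0).symm

theorem satisfiesPrekopaLeindler_volume_euclideanSpace (n : ℕ) :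
    SatisfiesPrekopaLeindler (volume : Measure (EuclideanSpace ℝ (Fin n))) :=
  (satisfiesPrekopaLeindler_volume_pi n).map_linearMap
    (WithLp.linearEquiv 2 ℝ (Fin n → ℝ)).symm.toLinearMap (PiLp.volume_preserving_toLp (Fin n))

section BrunnMinkowski

variable {E : Type*} [NormedAddCommGroup E] [NormedSpace ℝ E] [MeasurableSpace E] [BorelSpace E]
  {μ : Measure E}

theorem MeasureTheory.Measure.toReal_addHaar_smul_rpow_inv_finrank [FiniteDimensional ℝ E]
    [Nontrivial E] (μ : Measure E) [μ.IsAddHaarMeasure] {c : ℝ} (hc : 0 ≤ c) (s : Set E) :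
    (μ (c • s)).toReal ^ (Module.finrank ℝ E : ℝ)⁻¹
      = c * (μ s).toReal ^ (Module.finrank ℝ E : ℝ)⁻¹ := by
  rw [Measure.addHaar_smul_of_nonneg μ hc, ENNReal.toReal_mul,
    ENNReal.toReal_ofReal (by positivity), Real.mul_rpow (by positivity) ENNReal.toReal_nonneg,
    Real.pow_rpow_inv_natCast hc Module.finrank_pos.ne']

theorem SatisfiesPrekopaLeindler.toReal_rpow_mul_toReal_rpow_le [IsFiniteMeasureOnCompacts μ]
    (hμ : SatisfiesPrekopaLeindler μ) {t : ℝ} (ht0 : 0 < t) (ht1 : t < 1) {p : ℝ} (hp : 0 ≤ p)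
    {A B : Set E} (hA : IsCompact A) (hB : IsCompact B) :
    ((μ A).toReal ^ p) ^ (1 - t) * ((μ B).toReal ^ p) ^ t
      ≤ (μ ((1 - t) • A + t • B)).toReal ^ p := by
  have hS : IsCompact ((1 - t) • A + t • B) := (hA.smul _).add (hB.smul _)
  have hmul := hμ.measure_rpow_mul_rpow_le ht0 ht1 hA.measurableSet hB.measurableSet
    hS.measurableSet subset_rfl
  rw [← Real.rpow_mul ENNReal.toReal_nonneg, ← Real.rpow_mul ENNReal.toReal_nonneg, mul_comm p,
    mul_comm p, Real.rpow_mul ENNReal.toReal_nonneg, Real.rpow_mul ENNReal.toReal_nonneg,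
    ← Real.mul_rpow (by positivity) (by positivity), ENNReal.toReal_rpow, ENNReal.toReal_rpow,
    ← ENNReal.toReal_mul]
  exact ENNReal.toReal_rpow_le_toReal_rpow hS.measure_lt_top.ne hmul hp

theorem SatisfiesPrekopaLeindler.brunnMinkowski [FiniteDimensional ℝ E] [μ.IsAddHaarMeasure]
    [Nontrivial E] (hμ : SatisfiesPrekopaLeindler μ) {A B : Set E} (hA : IsCompact A)
    (hB : IsCompact B) (hA' : A.Nonempty) (hB' : B.Nonempty) :
    (μ A).toReal ^ (Module.finrank ℝ E : ℝ)⁻¹ + (μ B).toReal ^ (Module.finrank ℝ E : ℝ)⁻¹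
      ≤ (μ (A + B)).toReal ^ (Module.finrank ℝ E : ℝ)⁻¹ := by
  set p := (Module.finrank ℝ E : ℝ)⁻¹
  have hp : 0 ≤ p := by positivity
  have hAB : μ (A + B) ≠ ⊤ := (hA.add hB).measure_lt_top.ne
  set α := (μ A).toReal ^ p
  set β := (μ B).toReal ^ p
  have hα0 : 0 ≤ α := Real.rpow_nonneg ENNReal.toReal_nonneg p
  have hβ0 : 0 ≤ β := Real.rpow_nonneg ENNReal.toReal_nonneg p
  rcases hα0.eq_or_lt with hα | hα
  · rw [← hα, zero_add]
    exact ENNReal.toReal_rpow_le_toReal_rpow hAB (measure_le_measure_add_left hA'.some_mem) hp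
  rcases hβ0.eq_or_lt with hβ | hβ
  · rw [← hβ, add_zero]
    exact ENNReal.toReal_rpow_le_toReal_rpow hAB (measure_le_measure_add_right hB'.some_mem) hp
  -- rescale `A` and `B` to sets of the same volume `(α + β) ^ n`, whose combination is `A + B`
  have hαβ : 0 < α + β := add_pos hα hβ
  set s := β / (α + β)
  have hs0 : 0 < s := div_pos hβ hαβ
  have hs1 : s < 1 := (div_lt_one hαβ).2 (by linarith)
  have hsum : (1 - s) • (((α + β) / α) • A) + s • (((α + β) / β) • B) = A + B := by
    have h1 : (1 - s) * ((α + β) / α) = 1 := by simp only [s]; field_simp; ring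
    have h2 : s * ((α + β) / β) = 1 := by simp only [s]; field_simp
    rw [smul_smul, smul_smul, h1, h2, one_smul, one_smul]
  have key := hμ.toReal_rpow_mul_toReal_rpow_le hs0 hs1 hp (hA.smul ((α + β) / α))
    (hB.smul ((α + β) / β))
  rwa [hsum, Measure.toReal_addHaar_smul_rpow_inv_finrank μ (by positivity),
    Measure.toReal_addHaar_smul_rpow_inv_finrank μ (by positivity), div_mul_cancel₀ _ hα.ne',
    div_mul_cancel₀ _ hβ.ne', ← Real.rpow_add hαβ, sub_add_cancel, Real.rpow_one] at key

end BrunnMinkowski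

section Slices

variable {E : Type*} [AddCommGroup E] {K L : Set E}

theorem inter_singleton_sub_nonempty {x : E} (hx : x ∈ K + L) : (K ∩ ({x} - L)).Nonempty := by
  obtain ⟨k, hk, l, hl, rfl⟩ := hx
  exact ⟨k, hk, by simpa [singleton_sub] using ⟨l, hl, add_sub_cancel_right k l⟩⟩

theorem IsCompact.inter_singleton_sub [TopologicalSpace E] [IsTopologicalAddGroup E] [T2Space E]
    (hK : IsCompact K) (hL : IsCompact L) (x : E) : IsCompact (K ∩ ({x} - L)) := by
  rw [singleton_sub]
  exact hK.inter_right (hL.image (continuous_const.sub continuous_id)).isClosed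

theorem smul_inter_singleton_sub_add_smul_subset [Module ℝ E] (hK : Convex ℝ K)
    (hL : Convex ℝ L) (x y : E) {a b : ℝ} (ha : 0 ≤ a) (hb : 0 ≤ b) (hab : a + b = 1) :
    a • (K ∩ ({x} - L)) + b • (K ∩ ({y} - L)) ⊆ K ∩ ({a • x + b • y} - L) := by
  rintro _ ⟨_, ⟨p, ⟨hpK, hpL⟩, rfl⟩, _, ⟨q, ⟨hqK, hqL⟩, rfl⟩, rfl⟩
  rw [singleton_sub] at hpL hqL ⊢
  obtain ⟨l, hl, rfl⟩ := hpL
  obtain ⟨m, hm, rfl⟩ := hqL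
  refine ⟨hK hpK hqK ha hb hab, a • l + b • m, hL hl hm ha hb hab, ?_⟩
  simp only [smul_sub]
  abel

end Slices

theorem intersection_volume_concave_general (n : ℕ) (K L : Set (EuclideanSpace ℝ (Fin n)))
    (hK : IsCompact K) (hKc : Convex ℝ K)
    (hL : IsCompact L) (hLc : Convex ℝ L) :
    ConcaveOn ℝ (K + L)
      (fun x => (volume (K ∩ ({x} - L))).toReal ^ ((n : ℝ)⁻¹)) := by
  rcases eq_or_ne n 0 with rfl | hn
  · simpa using concaveOn_const (1 : ℝ) (hKc.add hLc)
  have : Nontrivial (EuclideanSpace ℝ (Fin n)) :=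
    Module.nontrivial_of_finrank_pos (R := ℝ) (by rw [finrank_euclideanSpace_fin]; omega)
  refine ⟨hKc.add hLc, fun x hx y hy a b ha hb hab => ?_⟩
  have hBM := (satisfiesPrekopaLeindler_volume_euclideanSpace n).brunnMinkowski
    ((hK.inter_singleton_sub hL x).smul a) ((hK.inter_singleton_sub hL y).smul b)
    (inter_singleton_sub_nonempty hx).smul_set (inter_singleton_sub_nonempty hy).smul_set
  rw [Measure.toReal_addHaar_smul_rpow_inv_finrank _ ha,
    Measure.toReal_addHaar_smul_rpow_inv_finrank _ hb, finrank_euclideanSpace_fin] at hBM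
  exact hBM.trans (ENNReal.toReal_rpow_le_toReal_rpow
    (hK.inter_singleton_sub hL _).measure_lt_top.ne
    (measure_mono (smul_inter_singleton_sub_add_smul_subset hKc hLc x y ha hb hab)) (by positivity))

theorem intersection_volume_concave (n : ℕ) (K L : Set (EuclideanSpace ℝ (Fin n)))
    (hK : IsCompact K) (hKc : Convex ℝ K) (hKi : (interior K).Nonempty)
    (hL : IsCompact L) (hLc : Convex ℝ L) (hLi : (interior L).Nonempty) :
    ConcaveOn ℝ (K + L)
      (fun x => (volume (K ∩ ({x} - L))).toReal ^ ((n : ℝ)⁻¹)) :=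
  intersection_volume_concave_general n K L hK hKc hL hLc
end

section
/- For convex bodies K, L in ℝⁿ and θ ∈ [0,1], |K +_θ L|^{1/n} ≥ (1 - θ^{1/n})(|K|^{1/n} + |L|^{1/n}). -/
open MeasureTheory Set
open scoped Pointwise

/-- The `θ`-convolution body of `K` and `L`. -/
noncomputable def convBody (n : ℕ) (θ : ℝ) (K L : Set (EuclideanSpace ℝ (Fin n))) :
    Set (EuclideanSpace ℝ (Fin n)) :=
  {x ∈ K + L |
    ENNReal.ofReal θ * (⨆ z : EuclideanSpace ℝ (Fin n), volume (K ∩ ({z} - L))) ≤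
      volume (K ∩ ({x} - L))}

/-!
Let `M = sup_z |K ∩ (z - L)|` and `θ^{1/n} < c < 1`. Pick `z` with `θ M ≤ cⁿ |K ∩ (z - L)|`.
For `x = k + l ∈ K + L`, convexity gives `(1 - c) k + c (K ∩ (z - L)) ⊆ K ∩ (c z + (1 - c) x - L)`,
so `c z + (1 - c) (K + L) ⊆ K +_θ L` and `|K +_θ L|^{1/n} ≥ (1 - c) |K + L|^{1/n}`. The
Brunn–Minkowski inequality `|K + L|^{1/n} ≥ |K|^{1/n} + |L|^{1/n}` and `c ↓ θ^{1/n}` finish.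

Brunn–Minkowski follows from the Prékopa–Leindler inequality, applied to indicators of rescaled
copies of `K` and `L` of equal volume. Prékopa–Leindler is proved on `ℝ` by integrating the
one-dimensional Brunn–Minkowski inequality `|A| + |B| ≤ |A + B|` over the level sets of `f` and `g`
normalized to supremum `1`, and passes to products by Fubini.
-/

open scoped ENNReal

theorem ENNReal.rpow_one_sub_mul_rpow_le_add {t : ℝ} (h0 : 0 < t) (h1 : t < 1) (p q : ℝ≥0∞) :
    p ^ (1 - t) * q ^ t ≤ ENNReal.ofReal (1 - t) * p + ENNReal.ofReal t * q := by
  have hweight : ∀ {s : ℝ}, 0 < s → ∀ x : ℝ≥0∞,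
      (x ^ s) ^ s⁻¹ / ENNReal.ofReal s⁻¹ = ENNReal.ofReal s * x := fun hs x => by
    rw [ENNReal.rpow_rpow_inv hs.ne', ENNReal.ofReal_inv_of_pos hs, div_eq_mul_inv, inv_inv,
      mul_comm]
  calc p ^ (1 - t) * q ^ t ≤ _ :=
        ENNReal.young_inequality _ _ (Real.HolderConjugate.one_sub_inv_inv h0 h1)
    _ = _ := by rw [hweight (sub_pos.2 h1), hweight h0]

theorem ENNReal.ofReal_toReal_rpow_inv_pow {X : ℝ≥0∞} (hX : X ≠ ⊤) {n : ℕ} (hn : n ≠ 0) :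
    ENNReal.ofReal ((X.toReal ^ (n : ℝ)⁻¹) ^ n) = X := by
  rw [Real.rpow_inv_natCast_pow ENNReal.toReal_nonneg hn, ENNReal.ofReal_toReal hX]

theorem ENNReal.le_toReal_rpow_inv_of_ofReal_pow_le {c : ℝ} (hc : 0 ≤ c) {Y : ℝ≥0∞}
    (hY : Y ≠ ⊤) {n : ℕ} (hn : n ≠ 0) (h : ENNReal.ofReal (c ^ n) ≤ Y) :
    c ≤ Y.toReal ^ (n : ℝ)⁻¹ := by
  rw [← Real.pow_rpow_inv_natCast hc hn]
  exact Real.rpow_le_rpow (by positivity) ((ENNReal.ofReal_le_iff_le_toReal hY).1 h)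
    (by positivity)

section LevelSets

variable {α : Type*} [MeasurableSpace α]

theorem lintegral_eq_lintegral_meas_lt_of_ne_top (μ : Measure α) {f : α → ℝ≥0∞}
    (hf : Measurable f) (hf_top : ∀ x, f x ≠ ⊤) :
    ∫⁻ x, f x ∂μ = ∫⁻ r in Ioi 0, μ {x | ENNReal.ofReal r < f x} := by
  have := lintegral_eq_lintegral_meas_lt μ (ae_of_all _ fun x => ENNReal.toReal_nonneg)
    hf.ennreal_toReal.aemeasurable
  simp only [ENNReal.ofReal_toReal (hf_top _)] at this
  rw [this]
  refine setLIntegral_congr_fun measurableSet_Ioi fun r hr => ?_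
  simp only [ENNReal.ofReal_lt_iff_lt_toReal hr.le (hf_top _)]

theorem measurable_measure_ofReal_lt (μ : Measure α) (f : α → ℝ≥0∞) :
    Measurable fun r : ℝ => μ {x | ENNReal.ofReal r < f x} :=
  Antitone.measurable fun _ _ hrs => measure_mono fun _ hx =>
    (ENNReal.ofReal_le_ofReal hrs).trans_lt hx

theorem exists_measure_lt_ne_zero_of_lintegral_ne_zero {μ : Measure α} {f : α → ℝ≥0∞}
    (hf : Measurable f) (hf₀ : ∫⁻ x, f x ∂μ ≠ 0) :
    ∃ r : ℝ≥0∞, r ≠ 0 ∧ μ {x | r < f x} ≠ 0 := by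
  by_contra! H
  have hcover : {x | f x ≠ 0} ⊆ ⋃ n : ℕ, {x | (n : ℝ≥0∞)⁻¹ < f x} := fun x hx =>
    mem_iUnion.2 (ENNReal.exists_inv_nat_lt hx)
  exact hf₀ ((lintegral_eq_zero_iff hf).2 (ae_iff.2 (measure_mono_null hcover
    (measure_iUnion_null fun n => H _ (ENNReal.inv_ne_zero.2 (ENNReal.natCast_ne_top n))))))

end LevelSets

-- Translating `A` by `inf B` and `B` by `sup A` gives two subsets of `A + B` meeting in one point.
theorem Real.volume_add_volume_le_volume_add_of_isCompact_s13 {A B : Set ℝ} (hA : IsCompact A)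
    (hB : IsCompact B) (hA₀ : A.Nonempty) (hB₀ : B.Nonempty) :
    volume A + volume B ≤ volume (A + B) := by
  set a := sSup A
  set b := sInf B
  have hAB : b +ᵥ A ⊆ A + B := by
    rintro _ ⟨x, hx, rfl⟩
    exact ⟨x, hx, b, hB.sInf_mem hB₀, add_comm x b⟩
  have hBA : a +ᵥ B ⊆ A + B := by
    rintro _ ⟨y, hy, rfl⟩
    exact add_mem_add (hA.sSup_mem hA₀) hy
  have hinter : (b +ᵥ A) ∩ (a +ᵥ B) ⊆ {a + b} := by
    rintro _ ⟨⟨x, hx, rfl⟩, ⟨y, hy, hyx⟩⟩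
    have := le_csSup hA.bddAbove hx
    have := csInf_le hB.bddBelow hy
    simp only [vadd_eq_add, mem_singleton_iff] at hyx ⊢
    linarith
  calc volume A + volume B = volume (b +ᵥ A) + volume (a +ᵥ B) := by
        rw [measure_vadd, measure_vadd]
    _ = volume ((b +ᵥ A) ∪ (a +ᵥ B)) :=
        (measure_union₀ (hB.measurableSet.const_vadd a).nullMeasurableSet
          (measure_mono_null hinter (measure_singleton _))).symm
    _ ≤ volume (A + B) := measure_mono (union_subset hAB hBA)

theorem Real.volume_add_volume_le_volume_add_s13 {A B : Set ℝ} (hA : MeasurableSet A)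
    (hB : MeasurableSet B) (hA₀ : A.Nonempty) (hB₀ : B.Nonempty) :
    volume A + volume B ≤ volume (A + B) := by
  obtain ⟨a, ha⟩ := hA₀
  obtain ⟨b, hb⟩ := hB₀
  rw [hA.measure_eq_iSup_isCompact, hB.measure_eq_iSup_isCompact]
  simp only [iSup_and']
  refine ENNReal.biSup_add_biSup_le' ⟨∅, empty_subset _, isCompact_empty⟩
    ⟨∅, empty_subset _, isCompact_empty⟩ fun K ⟨hKA, hK⟩ L ⟨hLB, hL⟩ => ?_
  calc volume K + volume L ≤ volume (insert a K) + volume (insert b L) :=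
        add_le_add (measure_mono (subset_insert _ _)) (measure_mono (subset_insert _ _))
    _ ≤ volume (insert a K + insert b L) :=
        volume_add_volume_le_volume_add_of_isCompact_s13 (hK.insert a) (hL.insert b)
          (insert_nonempty _ _) (insert_nonempty _ _)
    _ ≤ volume (A + B) :=
        measure_mono (add_subset_add (insert_subset ha hKA) (insert_subset hb hLB))

theorem Real.ofReal_mul_volume_add_ofReal_mul_volume_le {t : ℝ} (h0 : 0 < t) (h1 : t < 1)
    {A B C : Set ℝ} (hA : MeasurableSet A) (hB : MeasurableSet B) (hA₀ : A.Nonempty)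
    (hB₀ : B.Nonempty) (hABC : (1 - t) • A + t • B ⊆ C) :
    ENNReal.ofReal (1 - t) * volume A + ENNReal.ofReal t * volume B ≤ volume C := by
  have hsmul : ∀ {s : ℝ}, 0 < s → ∀ S : Set ℝ, volume (s • S) = ENNReal.ofReal s * volume S :=
    fun hs S => by rw [Measure.addHaar_smul_of_nonneg _ hs.le, Module.finrank_self, pow_one]
  rw [← hsmul (sub_pos.2 h1), ← hsmul h0]
  exact (volume_add_volume_le_volume_add_s13 (hA.const_smul₀ _) (hB.const_smul₀ _)
    hA₀.smul_set hB₀.smul_set).trans (measure_mono hABC)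

section PrekopaLeindlerReal

variable {t : ℝ} {f g h : ℝ → ℝ≥0∞}

-- `h` is truncated at `1` so that the layer-cake formula applies to it.
theorem volume_levelSet_add_le_of_iSup_eq_one (h0 : 0 < t) (h1 : t < 1) (hf : Measurable f)
    (hg : Measurable g) (hf₁ : ⨆ x, f x = 1) (hg₁ : ⨆ y, g y = 1)
    (hfgh : ∀ x y, f x ^ (1 - t) * g y ^ t ≤ h ((1 - t) * x + t * y)) {r : ℝ} (hr : 0 < r) :
    ENNReal.ofReal (1 - t) * volume {x | ENNReal.ofReal r < f x} +
        ENNReal.ofReal t * volume {y | ENNReal.ofReal r < g y} ≤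
      volume {z | ENNReal.ofReal r < min (h z) 1} := by
  rcases lt_or_ge r 1 with hr1 | hr1
  · have hr1' : ENNReal.ofReal r < 1 := ENNReal.ofReal_lt_one.2 hr1
    obtain ⟨x₀, hx₀⟩ := lt_iSup_iff.1 (hf₁ ▸ hr1')
    obtain ⟨y₀, hy₀⟩ := lt_iSup_iff.1 (hg₁ ▸ hr1')
    refine Real.ofReal_mul_volume_add_ofReal_mul_volume_le h0 h1
      (measurableSet_lt measurable_const hf) (measurableSet_lt measurable_const hg)
      ⟨x₀, hx₀⟩ ⟨y₀, hy₀⟩ ?_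
    rintro _ ⟨_, ⟨x, hx, rfl⟩, _, ⟨y, hy, rfl⟩, rfl⟩
    have hr0 : ENNReal.ofReal r ≠ 0 := by simpa using hr
    refine lt_min ?_ hr1'
    calc ENNReal.ofReal r = ENNReal.ofReal r ^ (1 - t) * ENNReal.ofReal r ^ t := by
          rw [← ENNReal.rpow_add _ _ hr0 ENNReal.ofReal_ne_top, sub_add_cancel,
            ENNReal.rpow_one]
      _ < f x ^ (1 - t) * g y ^ t :=
          ENNReal.mul_lt_mul (ENNReal.rpow_lt_rpow hx (sub_pos.2 h1))
            (ENNReal.rpow_lt_rpow hy h0)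
      _ ≤ h ((1 - t) • x + t • y) := hfgh x y
  · have hempty : ∀ φ : ℝ → ℝ≥0∞, ⨆ x, φ x = 1 → {x | ENNReal.ofReal r < φ x} = ∅ :=
      fun φ hφ => eq_empty_of_forall_notMem fun x hx =>
        hx.not_ge ((le_iSup φ x).trans (hφ ▸ ENNReal.one_le_ofReal.2 hr1))
    simp [hempty f hf₁, hempty g hg₁]

theorem prekopaLeindler_real_of_iSup_eq_one (h0 : 0 < t) (h1 : t < 1) (hf : Measurable f)
    (hg : Measurable g) (hh : Measurable h) (hf₁ : ⨆ x, f x = 1) (hg₁ : ⨆ y, g y = 1)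
    (hfgh : ∀ x y, f x ^ (1 - t) * g y ^ t ≤ h ((1 - t) * x + t * y)) :
    ENNReal.ofReal (1 - t) * (∫⁻ x, f x) + ENNReal.ofReal t * ∫⁻ y, g y ≤ ∫⁻ z, h z := by
  have hne_top : ∀ {φ : ℝ → ℝ≥0∞}, ⨆ x, φ x = 1 → ∀ x, φ x ≠ ⊤ := fun hφ x =>
    ((le_iSup _ x).trans_eq hφ).trans_lt ENNReal.one_lt_top |>.ne
  calc ENNReal.ofReal (1 - t) * (∫⁻ x, f x) + ENNReal.ofReal t * ∫⁻ y, g y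
      = ∫⁻ r in Ioi 0, (ENNReal.ofReal (1 - t) * volume {x | ENNReal.ofReal r < f x} +
          ENNReal.ofReal t * volume {y | ENNReal.ofReal r < g y}) := by
        rw [lintegral_add_left ((measurable_measure_ofReal_lt _ f).const_mul _),
          lintegral_const_mul _ (measurable_measure_ofReal_lt _ f),
          lintegral_const_mul _ (measurable_measure_ofReal_lt _ g),
          ← lintegral_eq_lintegral_meas_lt_of_ne_top _ hf (hne_top hf₁),
          ← lintegral_eq_lintegral_meas_lt_of_ne_top _ hg (hne_top hg₁)]
    _ ≤ ∫⁻ r in Ioi 0, volume {z | ENNReal.ofReal r < min (h z) 1} :=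
        setLIntegral_mono (measurable_measure_ofReal_lt _ _) fun r hr =>
          volume_levelSet_add_le_of_iSup_eq_one h0 h1 hf hg hf₁ hg₁ hfgh hr
    _ = ∫⁻ z, min (h z) 1 :=
        (lintegral_eq_lintegral_meas_lt_of_ne_top _ (hh.min measurable_const)
          fun z => (min_le_right _ _).trans_lt ENNReal.one_lt_top |>.ne).symm
    _ ≤ ∫⁻ z, h z := lintegral_mono fun z => min_le_left _ _

-- `h ≥ f x ^ s * r ^ t` on the translate `s x + t • {g > r}`, and `f x` is unbounded.
theorem prekopaLeindler_real_lintegral_eq_top {s : ℝ} (hs : 0 < s) (ht : 0 < t)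
    (hg : Measurable g) (hh : Measurable h)
    (hfgh : ∀ x y, f x ^ s * g y ^ t ≤ h (s * x + t * y))
    (hf : ⨆ x, f x = ⊤) (hg₀ : ∫⁻ y, g y ≠ 0) : ∫⁻ z, h z = ⊤ := by
  obtain ⟨r, hr, hB⟩ := exists_measure_lt_ne_zero_of_lintegral_ne_zero hg hg₀
  set B := {y | r < g y}
  have hbound : ∀ x, f x ^ s * (r ^ t * (ENNReal.ofReal t * volume B)) ≤ ∫⁻ z, h z := by
    intro x
    have hsub : s * x +ᵥ t • B ⊆ {z | f x ^ s * r ^ t ≤ h z} := by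
      rintro _ ⟨_, ⟨y, hy, rfl⟩, rfl⟩
      calc f x ^ s * r ^ t ≤ f x ^ s * g y ^ t := by gcongr; exact le_of_lt hy
        _ ≤ h (s * x + t * y) := hfgh x y
    calc f x ^ s * (r ^ t * (ENNReal.ofReal t * volume B))
        = f x ^ s * r ^ t * volume (s * x +ᵥ t • B) := by
          rw [measure_vadd, Measure.addHaar_smul_of_nonneg _ ht.le, Module.finrank_self, pow_one,
            mul_assoc]
      _ ≤ f x ^ s * r ^ t * volume {z | f x ^ s * r ^ t ≤ h z} := by gcongr
      _ ≤ ∫⁻ z, h z := mul_meas_ge_le_lintegral₀ hh.aemeasurable _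
  have hsup : ⨆ x, f x ^ s = ⊤ := by
    have := (ENNReal.orderIsoRpow s hs).map_iSup f
    simp only [ENNReal.orderIsoRpow_apply, hf] at this
    rw [← this, ENNReal.top_rpow_of_pos hs]
  have := iSup_le hbound
  rw [← ENNReal.iSup_mul, hsup, ENNReal.top_mul] at this
  · exact top_le_iff.1 this
  · simp [hr, ht, ht.le, hB, ENNReal.rpow_eq_zero_iff]

theorem prekopaLeindler_real_of_iSup_ne_top (h0 : 0 < t) (h1 : t < 1) (hf : Measurable f)
    (hg : Measurable g) (hh : Measurable h) (hf₀ : ⨆ x, f x ≠ 0) (hf_top : ⨆ x, f x ≠ ⊤)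
    (hg₀ : ⨆ y, g y ≠ 0) (hg_top : ⨆ y, g y ≠ ⊤)
    (hfgh : ∀ x y, f x ^ (1 - t) * g y ^ t ≤ h ((1 - t) * x + t * y)) :
    (∫⁻ x, f x) ^ (1 - t) * (∫⁻ y, g y) ^ t ≤ ∫⁻ z, h z := by
  have h1t : 0 < 1 - t := sub_pos.2 h1
  set a := ⨆ x, f x
  set b := ⨆ y, g y
  set c := a ^ (1 - t) * b ^ t
  have hc₀ : c ≠ 0 := by
    simp [c, hf₀, hg₀, hf_top, hg_top, h0, h1t, ENNReal.rpow_eq_zero_iff]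
  have hc_top : c ≠ ⊤ := ENNReal.mul_ne_top (ENNReal.rpow_ne_top_of_nonneg h1t.le hf_top)
    (ENNReal.rpow_ne_top_of_nonneg h0.le hg_top)
  have hscale : ∀ u v : ℝ≥0∞,
      (a⁻¹ * u) ^ (1 - t) * (b⁻¹ * v) ^ t = c⁻¹ * (u ^ (1 - t) * v ^ t) := by
    intro u v
    rw [ENNReal.mul_rpow_of_nonneg _ _ h1t.le, ENNReal.mul_rpow_of_nonneg _ _ h0.le,
      ENNReal.inv_rpow, ENNReal.inv_rpow,
      ENNReal.mul_inv (Or.inr (ENNReal.rpow_ne_top_of_nonneg h0.le hg_top))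
        (Or.inl (ENNReal.rpow_ne_top_of_nonneg h1t.le hf_top))]
    ring
  have hnormalized := prekopaLeindler_real_of_iSup_eq_one h0 h1 (hf.const_mul a⁻¹)
    (hg.const_mul b⁻¹) (hh.const_mul c⁻¹)
    (by rw [← ENNReal.mul_iSup, ENNReal.inv_mul_cancel hf₀ hf_top])
    (by rw [← ENNReal.mul_iSup, ENNReal.inv_mul_cancel hg₀ hg_top])
    fun x y => by rw [hscale]; gcongr; exact hfgh x y
  rw [lintegral_const_mul _ hf, lintegral_const_mul _ hg, lintegral_const_mul _ hh]
    at hnormalized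
  have := (ENNReal.rpow_one_sub_mul_rpow_le_add h0 h1 _ _).trans hnormalized
  rwa [hscale, ENNReal.mul_le_mul_iff_right (ENNReal.inv_ne_zero.2 hc_top)
    (ENNReal.inv_ne_top.2 hc₀)] at this

end PrekopaLeindlerReal

def HasPrekopaLeindler {E : Type*} [AddCommGroup E] [Module ℝ E] [MeasurableSpace E]
    (μ : Measure E) : Prop :=
  ∀ ⦃t : ℝ⦄, 0 < t → t < 1 → ∀ ⦃f g h : E → ℝ≥0∞⦄, Measurable f → Measurable g → Measurable h →
    (∀ x y, f x ^ (1 - t) * g y ^ t ≤ h ((1 - t) • x + t • y)) →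
    (∫⁻ x, f x ∂μ) ^ (1 - t) * (∫⁻ y, g y ∂μ) ^ t ≤ ∫⁻ z, h z ∂μ

theorem hasPrekopaLeindler_volume_real : HasPrekopaLeindler (volume : Measure ℝ) := by
  intro t h0 h1 f g h hf hg hh hfgh
  have h1t : 0 < 1 - t := sub_pos.2 h1
  have hsup₀ : ∀ φ : ℝ → ℝ≥0∞, ∫⁻ x, φ x ≠ 0 → ⨆ x, φ x ≠ 0 := fun φ hφ hsup =>
    hφ (by simp [ENNReal.iSup_eq_zero.1 hsup])
  rcases eq_or_ne (∫⁻ x, f x) 0 with hf₀ | hf₀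
  · simp [hf₀, ENNReal.zero_rpow_of_pos h1t]
  rcases eq_or_ne (∫⁻ y, g y) 0 with hg₀ | hg₀
  · simp [hg₀, ENNReal.zero_rpow_of_pos h0]
  rcases eq_or_ne (⨆ x, f x) ⊤ with hf_top | hf_top
  · simp [prekopaLeindler_real_lintegral_eq_top h1t h0 hg hh hfgh hf_top hg₀]
  rcases eq_or_ne (⨆ y, g y) ⊤ with hg_top | hg_top
  · have hgfh : ∀ y x, g y ^ t * f x ^ (1 - t) ≤ h (t * y + (1 - t) * x) := fun y x => by
      rw [mul_comm, add_comm]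
      exact hfgh x y
    simp [prekopaLeindler_real_lintegral_eq_top h0 h1t hf hh hgfh hg_top hf₀]
  exact prekopaLeindler_real_of_iSup_ne_top h0 h1 hf hg hh (hsup₀ f hf₀) hf_top (hsup₀ g hg₀)
    hg_top hfgh

section HasPrekopaLeindler

variable {E F : Type*} [AddCommGroup E] [Module ℝ E] [MeasurableSpace E]
  [AddCommGroup F] [Module ℝ F] [MeasurableSpace F]

theorem hasPrekopaLeindler_dirac_zero : HasPrekopaLeindler (Measure.dirac (0 : E)) := by
  intro t h0 h1 f g h hf hg hh hfgh
  simpa [lintegral_dirac' _ hf, lintegral_dirac' _ hg, lintegral_dirac' _ hh] using hfgh 0 0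

theorem HasPrekopaLeindler.prod {μ : Measure E} {ν : Measure F} [SFinite ν]
    (hμ : HasPrekopaLeindler μ) (hν : HasPrekopaLeindler ν) :
    HasPrekopaLeindler (μ.prod ν) := by
  intro t h0 h1 f g h hf hg hh hfgh
  have hfiber : ∀ a b, (∫⁻ x, f (a, x) ∂ν) ^ (1 - t) * (∫⁻ y, g (b, y) ∂ν) ^ t ≤
      ∫⁻ z, h ((1 - t) • a + t • b, z) ∂ν := fun a b =>
    hν h0 h1 (hf.comp measurable_prodMk_left) (hg.comp measurable_prodMk_left)
      (hh.comp measurable_prodMk_left) fun x y => hfgh (a, x) (b, y)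
  have := hμ h0 h1 hf.lintegral_prod_right' hg.lintegral_prod_right' hh.lintegral_prod_right'
    hfiber
  rwa [← lintegral_prod _ hf.aemeasurable, ← lintegral_prod _ hg.aemeasurable,
    ← lintegral_prod _ hh.aemeasurable] at this

theorem HasPrekopaLeindler.of_measurePreserving {μ : Measure E} {ν : Measure F}
    (e : E →ₗ[ℝ] F) (he : MeasurePreserving e μ ν) (hμ : HasPrekopaLeindler μ) :
    HasPrekopaLeindler ν := by
  intro t h0 h1 f g h hf hg hh hfgh
  rw [← he.lintegral_comp hf, ← he.lintegral_comp hg, ← he.lintegral_comp hh]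
  exact hμ h0 h1 (hf.comp he.measurable) (hg.comp he.measurable) (hh.comp he.measurable)
    fun x y => by simpa using hfgh (e x) (e y)

theorem HasPrekopaLeindler.measure_rpow_mul_rpow_le {μ : Measure E} (hμ : HasPrekopaLeindler μ)
    {t : ℝ} (h0 : 0 < t) (h1 : t < 1) {A B C : Set E} (hA : MeasurableSet A)
    (hB : MeasurableSet B) (hC : MeasurableSet C) (hABC : (1 - t) • A + t • B ⊆ C) :
    μ A ^ (1 - t) * μ B ^ t ≤ μ C := by
  have := hμ h0 h1 (measurable_one.indicator hA) (measurable_one.indicator hB)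
    (measurable_one.indicator hC) fun x y => ?_
  · simpa [lintegral_indicator_one hA, lintegral_indicator_one hB, lintegral_indicator_one hC]
      using this
  by_cases hx : x ∈ A
  · by_cases hy : y ∈ B
    · simp [indicator_of_mem hx, indicator_of_mem hy,
        indicator_of_mem (hABC (add_mem_add (smul_mem_smul_set hx) (smul_mem_smul_set hy)))]
    · simp [indicator_of_notMem hy, ENNReal.zero_rpow_of_pos h0]
  · simp [indicator_of_notMem hx, ENNReal.zero_rpow_of_pos (sub_pos.2 h1)]

end HasPrekopaLeindler

theorem hasPrekopaLeindler_volume_pi :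
    ∀ n : ℕ, HasPrekopaLeindler (volume : Measure (Fin n → ℝ))
  | 0 => by
    rw [Measure.volume_pi_eq_dirac 0]
    exact hasPrekopaLeindler_dirac_zero
  | n + 1 => by
    refine (hasPrekopaLeindler_volume_real.prod
      (hasPrekopaLeindler_volume_pi n)).of_measurePreserving
      (Fin.consLinearEquiv ℝ fun _ => ℝ).toLinearMap ?_
    have hcons : ⇑(Fin.consLinearEquiv ℝ fun _ : Fin (n + 1) => ℝ).toLinearMap =
        (MeasurableEquiv.piFinSuccAbove (fun _ : Fin (n + 1) => ℝ) 0).symm := by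
      funext p
      simp only [LinearEquiv.coe_coe, MeasurableEquiv.piFinSuccAbove_symm_apply,
        Fin.insertNthEquiv_zero]
      rfl
    rw [hcons, ← Measure.volume_eq_prod]
    exact (volume_preserving_piFinSuccAbove _ 0).symm

theorem hasPrekopaLeindler_volume_euclideanSpace (n : ℕ) :
    HasPrekopaLeindler (volume : Measure (EuclideanSpace ℝ (Fin n))) :=
  (hasPrekopaLeindler_volume_pi n).of_measurePreserving
    (WithLp.linearEquiv 2 ℝ (Fin n → ℝ)).symm.toLinearMap (PiLp.volume_preserving_toLp (Fin n))

theorem HasPrekopaLeindler.brunnMinkowski {E : Type*} [NormedAddCommGroup E] [NormedSpace ℝ E]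
    [MeasurableSpace E] [BorelSpace E] [FiniteDimensional ℝ E] {μ : Measure E}
    [μ.IsAddHaarMeasure] (hμ : HasPrekopaLeindler μ) (hE : Module.finrank ℝ E ≠ 0)
    {K L : Set E} (hK : IsCompact K) (hL : IsCompact L) (hK₀ : μ K ≠ 0) (hL₀ : μ L ≠ 0) :
    (μ K).toReal ^ (Module.finrank ℝ E : ℝ)⁻¹ + (μ L).toReal ^ (Module.finrank ℝ E : ℝ)⁻¹ ≤
      (μ (K + L)).toReal ^ (Module.finrank ℝ E : ℝ)⁻¹ := by
  set d := Module.finrank ℝ E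
  set a := (μ K).toReal ^ (d : ℝ)⁻¹
  set b := (μ L).toReal ^ (d : ℝ)⁻¹
  have ha : 0 < a := Real.rpow_pos_of_pos (ENNReal.toReal_pos hK₀ hK.measure_ne_top) _
  have hb : 0 < b := Real.rpow_pos_of_pos (ENNReal.toReal_pos hL₀ hL.measure_ne_top) _
  set s := a + b
  have hs : 0 < s := add_pos ha hb
  -- `(s / a) • K` and `(s / b) • L` both have measure `s ^ d`, and `K + L` is their convex
  -- combination with weight `b / s`.
  have hrescale : ∀ {S : Set E} {c : ℝ}, 0 < c → μ S = ENNReal.ofReal (c ^ d) →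
      μ ((s / c) • S) = ENNReal.ofReal (s ^ d) := fun hc hS => by
    rw [Measure.addHaar_smul_of_nonneg _ (by positivity), hS,
      ← ENNReal.ofReal_mul (by positivity), ← mul_pow, div_mul_cancel₀ _ hc.ne']
  have hcancel : ∀ {c : ℝ}, 0 < c → ∀ S : Set E, (c / s) • (s / c) • S = S := fun hc S => by
    rw [smul_smul, div_mul_div_cancel₀ hs.ne', div_self hc.ne', one_smul]
  have hKL : (1 - b / s) • ((s / a) • K) + (b / s) • ((s / b) • L) = K + L := by
    rw [show 1 - b / s = a / s by field_simp; ring, hcancel ha, hcancel hb]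
  have hmul := hμ.measure_rpow_mul_rpow_le (div_pos hb hs)
    ((div_lt_one hs).2 (lt_add_of_pos_left b ha)) (hK.smul _).measurableSet
    (hL.smul _).measurableSet (hK.add hL).measurableSet hKL.le
  rw [hrescale ha (ENNReal.ofReal_toReal_rpow_inv_pow hK.measure_ne_top hE).symm,
    hrescale hb (ENNReal.ofReal_toReal_rpow_inv_pow hL.measure_ne_top hE).symm,
    ← ENNReal.rpow_add _ _ (by simp [hs]) ENNReal.ofReal_ne_top, sub_add_cancel,
    ENNReal.rpow_one] at hmul
  exact ENNReal.le_toReal_rpow_inv_of_ofReal_pow_le hs.le (hK.add hL).measure_ne_top hE hmul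

theorem Set.mem_singleton_sub_iff {G : Type*} [AddCommGroup G] {L : Set G} {z w : G} :
    w ∈ {z} - L ↔ z - w ∈ L := by
  rw [singleton_sub]
  constructor
  · rintro ⟨l, hl, rfl⟩
    rwa [sub_sub_cancel]
  · exact fun h => ⟨z - w, h, sub_sub_cancel z w⟩

theorem Convex.vadd_smul_inter_singleton_sub_subset {E : Type*} [AddCommGroup E] [Module ℝ E]
    {K L : Set E} (hK : Convex ℝ K) (hL : Convex ℝ L) {k l z : E} (hk : k ∈ K) (hl : l ∈ L)
    {c : ℝ} (hc₀ : 0 ≤ c) (hc₁ : c ≤ 1) :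
    (1 - c) • k +ᵥ c • (K ∩ ({z} - L)) ⊆ K ∩ ({c • z + (1 - c) • (k + l)} - L) := by
  rintro _ ⟨_, ⟨u, ⟨huK, huL⟩, rfl⟩, rfl⟩
  rw [mem_singleton_sub_iff] at huL
  refine ⟨hK hk huK (sub_nonneg.2 hc₁) hc₀ (sub_add_cancel 1 c), mem_singleton_sub_iff.2 ?_⟩
  convert hL huL hl hc₀ (sub_nonneg.2 hc₁) (add_sub_cancel c 1) using 1
  simp only [vadd_eq_add]
  module

theorem iSup_measure_inter_singleton_sub_pos {E : Type*} [AddCommGroup E] [TopologicalSpace E]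
    [IsTopologicalAddGroup E] [MeasurableSpace E] (μ : Measure E) [μ.IsOpenPosMeasure]
    {K L : Set E} (hK : (interior K).Nonempty) (hL : (interior L).Nonempty) :
    0 < ⨆ z, μ (K ∩ ({z} - L)) := by
  obtain ⟨x, hx⟩ := hK
  obtain ⟨y, hy⟩ := hL
  have hopen : IsOpen (interior K ∩ ({x + y} - interior L)) :=
    isOpen_interior.inter isOpen_interior.sub_left
  calc 0 < μ (interior K ∩ ({x + y} - interior L)) :=
        hopen.measure_pos μ ⟨x, hx, mem_singleton_sub_iff.2 (by simpa using hy)⟩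
    _ ≤ μ (K ∩ ({x + y} - L)) :=
        measure_mono (inter_subset_inter interior_subset (sub_subset_sub_left interior_subset))
    _ ≤ ⨆ z, μ (K ∩ ({z} - L)) := le_iSup (fun z => μ (K ∩ ({z} - L))) (x + y)

section ConvBody

variable {n : ℕ} {K L : Set (EuclideanSpace ℝ (Fin n))}

theorem vadd_smul_add_subset_convBody (hK : Convex ℝ K) (hL : Convex ℝ L) {θ c : ℝ}
    (hc₀ : 0 ≤ c) (hc₁ : c ≤ 1) {z : EuclideanSpace ℝ (Fin n)} (hz : z ∈ K + L)
    (hθ : ENNReal.ofReal θ * ⨆ z', volume (K ∩ ({z'} - L)) ≤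
      ENNReal.ofReal (c ^ n) * volume (K ∩ ({z} - L))) :
    c • z +ᵥ (1 - c) • (K + L) ⊆ convBody n θ K L := by
  rintro _ ⟨_, ⟨x, ⟨k, hk, l, hl, rfl⟩, rfl⟩, rfl⟩
  refine ⟨(hK.add hL) hz (add_mem_add hk hl) hc₀ (sub_nonneg.2 hc₁) (add_sub_cancel c 1),
    hθ.trans ?_⟩
  calc ENNReal.ofReal (c ^ n) * volume (K ∩ ({z} - L))
      = volume ((1 - c) • k +ᵥ c • (K ∩ ({z} - L))) := by
        rw [measure_vadd, Measure.addHaar_smul_of_nonneg _ hc₀, finrank_euclideanSpace_fin]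
    _ ≤ volume (K ∩ ({c • z +ᵥ (1 - c) • (k + l)} - L)) :=
        measure_mono (hK.vadd_smul_inter_singleton_sub_subset hL hk hl hc₀ hc₁)

theorem ofReal_pow_mul_volume_add_le_volume_convBody (hK : IsCompact K) (hKc : Convex ℝ K)
    (hKi : (interior K).Nonempty) (hLc : Convex ℝ L) (hLi : (interior L).Nonempty)
    {θ c : ℝ} (hθ : 0 ≤ θ) (hc₀ : 0 ≤ c) (hc₁ : c ≤ 1) (hθc : θ < c ^ n) :
    ENNReal.ofReal ((1 - c) ^ n) * volume (K + L) ≤ volume (convBody n θ K L) := by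
  set M := ⨆ z, volume (K ∩ ({z} - L))
  have hM₀ : M ≠ 0 := (iSup_measure_inter_singleton_sub_pos volume hKi hLi).ne'
  have hM_top : M ≠ ⊤ := ne_top_of_le_ne_top hK.measure_ne_top
    (iSup_le fun z => measure_mono inter_subset_left)
  have hlt : ENNReal.ofReal θ * M < ⨆ z, ENNReal.ofReal (c ^ n) * volume (K ∩ ({z} - L)) := by
    rw [← ENNReal.mul_iSup]
    exact ENNReal.mul_lt_mul_left hM₀ hM_top
      ((ENNReal.ofReal_lt_ofReal_iff (hθ.trans_lt hθc)).2 hθc)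
  obtain ⟨z, hz⟩ := lt_iSup_iff.1 hlt
  have hz₀ : volume (K ∩ ({z} - L)) ≠ 0 := fun h => by
    rw [h, mul_zero] at hz
    exact ENNReal.not_lt_zero hz
  obtain ⟨w, hwK, hwL⟩ := nonempty_of_measure_ne_zero hz₀
  have hzKL : z ∈ K + L := ⟨w, hwK, z - w, mem_singleton_sub_iff.1 hwL, add_sub_cancel w z⟩
  calc ENNReal.ofReal ((1 - c) ^ n) * volume (K + L)
      = volume (c • z +ᵥ (1 - c) • (K + L)) := by
        rw [measure_vadd, Measure.addHaar_smul_of_nonneg _ (sub_nonneg.2 hc₁),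
          finrank_euclideanSpace_fin]
    _ ≤ volume (convBody n θ K L) :=
        measure_mono (vadd_smul_add_subset_convBody hKc hLc hc₀ hc₁ hzKL hz.le)

theorem one_sub_mul_le_toReal_volume_convBody_rpow (hn : n ≠ 0) (hK : IsCompact K)
    (hKc : Convex ℝ K) (hKi : (interior K).Nonempty) (hL : IsCompact L) (hLc : Convex ℝ L)
    (hLi : (interior L).Nonempty) {θ c : ℝ} (hθ : 0 ≤ θ) (hc₀ : 0 ≤ c) (hc₁ : c ≤ 1)
    (hθc : θ < c ^ n) :
    (1 - c) * ((volume K).toReal ^ (n : ℝ)⁻¹ + (volume L).toReal ^ (n : ℝ)⁻¹) ≤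
      (volume (convBody n θ K L)).toReal ^ (n : ℝ)⁻¹ := by
  have hBM := (hasPrekopaLeindler_volume_euclideanSpace n).brunnMinkowski (by simpa using hn)
    hK hL (Measure.measure_pos_of_nonempty_interior _ hKi).ne'
    (Measure.measure_pos_of_nonempty_interior _ hLi).ne'
  rw [finrank_euclideanSpace_fin] at hBM
  have hKL_top : volume (K + L) ≠ ⊤ := (hK.add hL).measure_ne_top
  have hvol := ofReal_pow_mul_volume_add_le_volume_convBody hK hKc hKi hLc hLi hθ hc₀ hc₁ hθc
  rw [← ENNReal.ofReal_toReal_rpow_inv_pow hKL_top hn, ← ENNReal.ofReal_mul (by positivity),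
    ← mul_pow] at hvol
  calc _ ≤ (1 - c) * (volume (K + L)).toReal ^ (n : ℝ)⁻¹ := by gcongr
    _ ≤ _ := ENNReal.le_toReal_rpow_inv_of_ofReal_pow_le
        (mul_nonneg (sub_nonneg.2 hc₁) (by positivity))
        (ne_top_of_le_ne_top hKL_top (measure_mono fun x hx => hx.1)) hn hvol

end ConvBody

theorem convBody_BrunnMinkowski (n : ℕ) (K L : Set (EuclideanSpace ℝ (Fin n)))
    (hK : IsCompact K) (hKc : Convex ℝ K) (hKi : (interior K).Nonempty)
    (hL : IsCompact L) (hLc : Convex ℝ L) (hLi : (interior L).Nonempty)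
    (θ : ℝ) (hθ : θ ∈ Set.Icc (0 : ℝ) 1) :
    (volume (convBody n θ K L)).toReal ^ ((n : ℝ)⁻¹) ≥
      (1 - θ ^ ((n : ℝ)⁻¹)) *
        ((volume K).toReal ^ ((n : ℝ)⁻¹) + (volume L).toReal ^ ((n : ℝ)⁻¹)) := by
  obtain ⟨hθ₀, hθ₁⟩ := hθ
  rcases Nat.eq_zero_or_pos n with rfl | hn
  · simp
  rcases hθ₁.eq_or_lt with rfl | hθ₁
  · simp [Real.rpow_nonneg]
  set c₀ := θ ^ (n : ℝ)⁻¹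
  -- The supremum in `convBody` need not be attained, so `c₀` is approached from above.
  refine le_of_tendsto (((continuous_const.sub continuous_id).mul continuous_const).tendsto c₀
    |>.mono_left (nhdsWithin_le_nhds (s := Ioi c₀))) ?_
  filter_upwards [Ioo_mem_nhdsGT (Real.rpow_lt_one hθ₀ hθ₁ (by positivity))]
    with c ⟨hc₀c, hc₁⟩
  refine one_sub_mul_le_toReal_volume_convBody_rpow hn.ne' hK hKc hKi hL hLc hLi hθ₀
    ((Real.rpow_nonneg hθ₀ _).trans hc₀c.le) hc₁.le ?_
  calc θ = c₀ ^ n := (Real.rpow_inv_natCast_pow hθ₀ hn.ne').symm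
    _ < c ^ n := pow_lt_pow_left₀ hc₀c (Real.rpow_nonneg hθ₀ _) hn.ne'
end
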